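/- arXiv:1905.11350 — 2 statements merged into one kernel-verified Lean document; each statement's English description precedes it below -/
import Mathlib

section
/- For any set A ⊆ {0,1}^n of density 1/2 there exists a bijection φ : {0,1}^{n-1} → A with average stretch avgStretch(φ) ≤ 2√(2n) + 1 = O(√n). -/
/-!
Let `S = {x₀ = 0}` be the embedded copy of `{0,1}^n` in the `N`-cube, `N = n + 1`, and let `σ`
be a bijection `S → A` of least total Hamming displacement. Optimality forbids cycles of
reassignments that lower the cost, so least costs of alternating chains give a Kantorovich
potential: a 1-Lipschitz `u` with `dist(x, σ x) = u x - u (σ x)` on `S`. The total displacement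
is then `∑_S u - ∑_A u`, which Cauchy–Schwarz and the Poincaré inequality `Var u ≤ N / 4` on the
cube bound by `2^N √N / 2`. Each cube edge `x x'` is stretched by at most `1` plus the
displacements of `x` and `x'`, so the average stretch of `σ ∘ (x ↦ 0x)` is at most
`1 + 2 √N`.
-/

open Finset

/-- The average stretch of a map `φ : {0,1}^n → {0,1}^m`. -/
noncomputable def avgStretch (n : ℕ) {m : ℕ} (φ : (Fin n → Bool) → (Fin m → Bool)) : ℝ :=
  (∑ x : Fin n → Bool, ∑ i : Fin n,
    (hammingDist (φ x) (φ (Function.update x i (!(x i)))) : ℝ)) / (2 ^ n * n)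

theorem List.map_formPerm_eq_zipWith_rotate {α β : Type*} [DecidableEq α] (f : α → α → β)
    {L : List α} (hL : L.Nodup) :
    L.map (fun w => f w (L.formPerm w)) = List.zipWith f L (L.rotate 1) := by
  refine List.ext_getElem (by simp) fun i h₁ h₂ => ?_
  simp [List.formPerm_apply_getElem _ hL, List.getElem_rotate]

section Potential

variable {V : Type*} (d : V → V → ℝ) (σ : V → V)

/-- `chainCost d σ y [a₁, …, aₖ]` is the change of cost `∑ d a (σ a)` when each `σ aᵢ` is
reassigned from `aᵢ` to `aᵢ₋₁`, where `a₀ = y`. -/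
def chainCost (y : V) : List V → ℝ
  | [] => 0
  | a :: l => d y (σ a) - d a (σ a) + chainCost a l

variable {d σ}

theorem chainCost_append_cons (y x : V) (l t : List V) :
    chainCost d σ y (l ++ x :: t) = chainCost d σ y (l ++ [x]) + chainCost d σ x t := by
  induction l generalizing y with
  | nil => simp [chainCost]
  | cons a l ih => simp only [List.cons_append, chainCost, ih]; ring

theorem chainCost_eq_sum_zipWith (y : V) (l : List V) :
    chainCost d σ y l =
      (List.zipWith (fun p q => d p (σ q)) (y :: l) l).sum - (l.map fun q => d q (σ q)).sum := by
  induction l generalizing y with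
  | nil => simp [chainCost]
  | cons a l ih =>
    simp only [chainCost, ih, List.zipWith_cons_cons, List.map_cons, List.sum_cons]
    ring

theorem chainCost_le_chainCost_add (hd : ∀ a b, 0 ≤ d a b) (htri : ∀ a b c, d a c ≤ d a b + d b c)
    (y y' : V) : ∀ l : List V, chainCost d σ y l ≤ chainCost d σ y' l + d y y'
  | [] => by simpa [chainCost] using hd y y'
  | a :: l => by simp only [chainCost]; linarith [htri y y' (σ a)]

theorem chainCost_apply_cons (hd0 : ∀ a, d a a = 0) (x : V) (l : List V) :
    chainCost d σ (σ x) (x :: l) = -d x (σ x) + chainCost d σ x l := by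
  simp [chainCost, hd0]

variable [DecidableEq V]

theorem chainCost_cycle {x : V} {l : List V} (hL : (x :: l).Nodup) :
    chainCost d σ x (l ++ [x]) =
      ∑ w ∈ (x :: l).toFinset, (d w (σ ((x :: l).formPerm w)) - d w (σ w)) := by
  rw [sum_sub_distrib, List.sum_toFinset _ hL, List.sum_toFinset _ hL,
    List.map_formPerm_eq_zipWith_rotate (fun p q => d p (σ q)) hL, chainCost_eq_sum_zipWith]
  have : List.zipWith (fun p q => d p (σ q)) (x :: (l ++ [x])) (l ++ [x])
      = List.zipWith (fun p q => d p (σ q)) (x :: l) (l ++ [x]) := by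
    simpa using List.zipWith_append (f := fun p q => d p (σ q)) (l₁ := x :: l) (l₁' := [x])
      (l₂ := l ++ [x]) (l₂' := []) (by simp)
  simp [this, add_comm]

variable {S A : Finset V}

theorem chainCost_cycle_nonneg (hσ : Set.BijOn σ S A)
    (hmin : IsMinOn (fun τ : V → V => ∑ v ∈ S, d v (τ v)) {τ | Set.BijOn τ S A} σ)
    {x : V} {l : List V} (hL : (x :: l).Nodup) (hLS : ∀ v ∈ x :: l, v ∈ S) :
    0 ≤ chainCost d σ x (l ++ [x]) := by
  set π := (x :: l).formPerm
  have hπS : Set.MapsTo π S S := fun v hv => by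
    by_cases hvL : v ∈ x :: l
    · exact hLS _ (List.formPerm_apply_mem_of_mem hvL)
    · rwa [List.formPerm_apply_of_notMem hvL]
  have hπ : Set.BijOn π S S := (S.finite_toSet.injOn_iff_bijOn_of_mapsTo hπS).mp π.injective.injOn
  have hcost := isMinOn_iff.mp hmin _ (hσ.comp hπ)
  have hsupp : ∑ w ∈ (x :: l).toFinset, (d w (σ (π w)) - d w (σ w))
      = ∑ w ∈ S, (d w (σ (π w)) - d w (σ w)) := by
    refine sum_subset (fun v hv => hLS v (List.mem_toFinset.mp hv)) fun v _ hv => ?_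
    rw [List.formPerm_apply_of_notMem (by simpa using hv), sub_self]
  rw [chainCost_cycle hL, hsupp, sum_sub_distrib]
  exact sub_nonneg.mpr hcost

variable [Fintype V]

variable (S) in
def simpleChains : Finset (List V) :=
  ((univ : Finset {l : List V // l.Nodup}).map (Function.Embedding.subtype _)).filter
    (∀ v ∈ ·, v ∈ S)

theorem mem_simpleChains {l : List V} : l ∈ simpleChains S ↔ l.Nodup ∧ ∀ v ∈ l, v ∈ S := by
  simp [simpleChains]

variable (S) in
theorem simpleChains_nonempty : (simpleChains S).Nonempty := ⟨[], by simp [mem_simpleChains]⟩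

variable (d σ S) in
/-- Rockafellar's construction of a Kantorovich potential. -/
def potential (y : V) : ℝ := (simpleChains S).inf' (simpleChains_nonempty S) (chainCost d σ y)

theorem potential_le_potential_add (hd : ∀ a b, 0 ≤ d a b)
    (htri : ∀ a b c, d a c ≤ d a b + d b c) (y y' : V) :
    potential d σ S y ≤ potential d σ S y' + d y y' := by
  obtain ⟨l, hl, hy'⟩ := exists_mem_eq_inf' (simpleChains_nonempty S) (chainCost d σ y')
  calc potential d σ S y ≤ chainCost d σ y l := inf'_le _ hl
    _ ≤ chainCost d σ y' l + d y y' := chainCost_le_chainCost_add hd htri y y' l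
    _ = potential d σ S y' + d y y' := by rw [potential, hy']

theorem exists_notMem_chainCost_le (hσ : Set.BijOn σ S A)
    (hmin : IsMinOn (fun τ : V → V => ∑ v ∈ S, d v (τ v)) {τ | Set.BijOn τ S A} σ)
    {x : V} (hx : x ∈ S) {m : List V} (hm : m ∈ simpleChains S) :
    ∃ t ∈ simpleChains S, x ∉ t ∧ chainCost d σ x t ≤ chainCost d σ x m := by
  obtain ⟨hmnd, hmS⟩ := mem_simpleChains.mp hm
  by_cases hxm : x ∈ m
  · -- cut off the cycle through `x`, whose cost is nonnegative by optimality of `σ`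
    obtain ⟨l, t, rfl⟩ := List.append_of_mem hxm
    obtain ⟨hlnd, hxtnd, hdisj⟩ := List.nodup_append'.mp hmnd
    obtain ⟨hxt, htnd⟩ := List.nodup_cons.mp hxtnd
    have hxl : x ∉ l := fun h => hdisj h List.mem_cons_self
    have hcycle := chainCost_cycle_nonneg hσ hmin (List.nodup_cons.mpr ⟨hxl, hlnd⟩) (by
      rintro v (_ | ⟨_, hv⟩)
      exacts [hx, hmS v (List.mem_append_left _ hv)])
    refine ⟨t, mem_simpleChains.mpr ⟨htnd, fun v hv => hmS v (by simp [hv])⟩, hxt, ?_⟩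
    rw [chainCost_append_cons]
    linarith
  · exact ⟨m, hm, hxm, le_rfl⟩

theorem le_potential_sub_potential (hd0 : ∀ a, d a a = 0) (hσ : Set.BijOn σ S A)
    (hmin : IsMinOn (fun τ : V → V => ∑ v ∈ S, d v (τ v)) {τ | Set.BijOn τ S A} σ)
    {x : V} (hx : x ∈ S) :
    d x (σ x) ≤ potential d σ S x - potential d σ S (σ x) := by
  obtain ⟨m, hm, hxm⟩ := exists_mem_eq_inf' (simpleChains_nonempty S) (chainCost d σ x)
  obtain ⟨t, ht, hxt, hcost⟩ := exists_notMem_chainCost_le hσ hmin hx hm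
  obtain ⟨htnd, htS⟩ := mem_simpleChains.mp ht
  have hxt_chain : x :: t ∈ simpleChains S :=
    mem_simpleChains.mpr ⟨List.nodup_cons.mpr ⟨hxt, htnd⟩, by simpa [hx] using htS⟩
  have hσx := inf'_le (chainCost d σ (σ x)) hxt_chain
  rw [chainCost_apply_cons hd0] at hσx
  rw [potential, potential, hxm]
  linarith

theorem exists_potential_sum_le_sum_sub_sum (hd0 : ∀ a, d a a = 0) (hd : ∀ a b, 0 ≤ d a b)
    (htri : ∀ a b c, d a c ≤ d a b + d b c) (hσ : Set.BijOn σ S A)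
    (hmin : IsMinOn (fun τ : V → V => ∑ v ∈ S, d v (τ v)) {τ | Set.BijOn τ S A} σ) :
    ∃ u : V → ℝ, (∀ y y', u y ≤ u y' + d y y') ∧
      ∑ x ∈ S, d x (σ x) ≤ ∑ x ∈ S, u x - ∑ y ∈ A, u y := by
  refine ⟨potential d σ S, potential_le_potential_add hd htri, ?_⟩
  calc ∑ x ∈ S, d x (σ x) ≤ ∑ x ∈ S, (potential d σ S x - potential d σ S (σ x)) :=
        sum_le_sum fun x hx => le_potential_sub_potential hd0 hσ hmin hx
    _ = _ := by rw [sum_sub_distrib, sum_nbij σ hσ.mapsTo hσ.injOn hσ.surjOn fun _ _ => rfl]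

end Potential

theorem hammingDist_cons_cons {β : Type*} [DecidableEq β] {N : ℕ} (a b : β) (x y : Fin N → β) :
    hammingDist (Fin.cons a x : Fin (N + 1) → β) (Fin.cons b y) =
      (if a = b then 0 else 1) + hammingDist x y := by
  simp [hammingDist, Fin.card_filter_univ_succ', ite_not]

theorem hammingDist_update_not {N : ℕ} (x : Fin N → Bool) (i : Fin N) :
    hammingDist x (Function.update x i (!x i)) = 1 := by
  rw [hammingDist, card_eq_one]
  refine ⟨i, ?_⟩
  ext j
  rcases eq_or_ne j i with rfl | hj <;> simp [*]

theorem sum_cube_succ {M : Type*} [AddCommMonoid M] {N : ℕ} (F : (Fin (N + 1) → Bool) → M) :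
    ∑ z, F z = ∑ x, (F (Fin.cons false x) + F (Fin.cons true x)) := by
  rw [← (Fin.consEquiv fun _ => Bool).sum_comp, Fintype.sum_prod_type, Fintype.sum_bool,
    ← sum_add_distrib]
  exact sum_congr rfl fun _ _ => add_comm _ _

theorem two_pow_mul_sum_sq_sub_sq_sum_le (N : ℕ) (f : (Fin N → Bool) → ℝ)
    (hf : ∀ x y, |f x - f y| ≤ hammingDist x y) :
    2 ^ N * ∑ x, f x ^ 2 - (∑ x, f x) ^ 2 ≤ N * 4 ^ N / 4 := by
  induction N with
  | zero => simp
  | succ N ih =>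
    set g : (Fin N → Bool) → ℝ := fun x => (f (Fin.cons false x) + f (Fin.cons true x)) / 2
    set h : (Fin N → Bool) → ℝ := fun x => (f (Fin.cons false x) - f (Fin.cons true x)) / 2
    have hf_cons (b : Bool) (x y : Fin N → Bool) :
        |f (Fin.cons b x) - f (Fin.cons b y)| ≤ hammingDist x y := by
      simpa [hammingDist_cons_cons] using hf (Fin.cons b x) (Fin.cons b y)
    have hg (x y : Fin N → Bool) : |g x - g y| ≤ hammingDist x y := by
      have e : g x - g y = ((f (Fin.cons false x) - f (Fin.cons false y))
          + (f (Fin.cons true x) - f (Fin.cons true y))) / 2 := by simp only [g]; ring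
      rw [e, abs_div, abs_two, div_le_iff₀ two_pos]
      linarith [abs_add_le (f (Fin.cons false x) - f (Fin.cons false y))
        (f (Fin.cons true x) - f (Fin.cons true y)), hf_cons false x y, hf_cons true x y]
    have hh (x : Fin N → Bool) : h x ^ 2 ≤ 1 / 4 := by
      have hedge := hf (Fin.cons false x) (Fin.cons true x)
      simp only [hammingDist_cons_cons, hammingDist_self] at hedge
      have := (sq_le_one_iff_abs_le_one _).mpr (by simpa using hedge)
      calc h x ^ 2 = (f (Fin.cons false x) - f (Fin.cons true x)) ^ 2 / 4 := by simp only [h]; ring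
        _ ≤ 1 / 4 := by linarith
    have hsum : ∑ z, f z = 2 * ∑ x, g x := by
      rw [sum_cube_succ, mul_sum]
      exact sum_congr rfl fun x _ => by ring
    have hsum_sq : ∑ z, f z ^ 2 = 2 * ∑ x, g x ^ 2 + 2 * ∑ x, h x ^ 2 := by
      rw [sum_cube_succ, mul_sum, mul_sum, ← sum_add_distrib]
      exact sum_congr rfl fun x _ => by ring
    have hsum_h : ∑ x, h x ^ 2 ≤ 2 ^ N / 4 := by
      calc ∑ x, h x ^ 2 ≤ ∑ _x : Fin N → Bool, (1 / 4 : ℝ) := sum_le_sum fun x _ => hh x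
        _ = 2 ^ N / 4 := by simp [div_eq_mul_inv]
    have hpow : (4 : ℝ) ^ N = 2 ^ N * 2 ^ N := by rw [← mul_pow]; norm_num
    calc (2 ^ (N + 1) * ∑ z, f z ^ 2 - (∑ z, f z) ^ 2 : ℝ)
        = 4 * (2 ^ N * ∑ x, g x ^ 2 - (∑ x, g x) ^ 2) + 4 * (2 ^ N * ∑ x, h x ^ 2) := by
          rw [hsum, hsum_sq]; ring
      _ ≤ 4 * (N * 4 ^ N / 4) + 4 * (2 ^ N * (2 ^ N / 4)) := by gcongr; exact ih g hg
      _ = ((N + 1 : ℕ) : ℝ) * 4 ^ (N + 1) / 4 := by rw [pow_succ, hpow]; push_cast; ring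

theorem sum_sub_sum_le_of_card_eq {N : ℕ} {S A : Finset (Fin N → Bool)} (hcard : #S = #A)
    {u : (Fin N → Bool) → ℝ} (hu : ∀ x y, |u x - u y| ≤ hammingDist x y) :
    ∑ z ∈ S, u z - ∑ z ∈ A, u z ≤ 2 ^ N * √N / 2 := by
  set m := (∑ z, u z) / 2 ^ N
  set w := fun z => u z - m
  have hcentre : ∑ z ∈ S, u z - ∑ z ∈ A, u z = ∑ z ∈ S \ A, w z - ∑ z ∈ A \ S, w z := by
    rw [sum_sdiff_sub_sum_sdiff]
    simp [w, sum_sub_distrib, hcard]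
  have habs : ∑ z ∈ S \ A, w z - ∑ z ∈ A \ S, w z ≤ ∑ z, |w z| := by
    calc ∑ z ∈ S \ A, w z - ∑ z ∈ A \ S, w z ≤ ∑ z ∈ S \ A, |w z| + ∑ z ∈ A \ S, |w z| := by
          rw [sub_eq_add_neg, ← sum_neg_distrib]
          gcongr with z
          exacts [le_abs_self _, neg_le_abs _]
      _ = ∑ z ∈ (S \ A) ∪ (A \ S), |w z| := (sum_union disjoint_sdiff_sdiff).symm
      _ ≤ ∑ z, |w z| := sum_le_univ_sum_of_nonneg fun _ => abs_nonneg _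
  have hvar : 2 ^ N * ∑ z, w z ^ 2 = 2 ^ N * ∑ z, u z ^ 2 - (∑ z, u z) ^ 2 := by
    have hexp : ∑ z, w z ^ 2 = ∑ z, u z ^ 2 - 2 * m * ∑ z, u z + 2 ^ N * m ^ 2 := by
      simp only [w, sub_sq]
      rw [sum_add_distrib, sum_sub_distrib, ← sum_mul, ← mul_sum, sum_const, card_univ,
        Fintype.card_fun, Fintype.card_bool, Fintype.card_fin, nsmul_eq_mul]
      push_cast
      ring
    rw [hexp]
    simp only [m]
    field_simp
    ring
  have hcs : (∑ z, |w z|) ^ 2 ≤ 2 ^ N * ∑ z, w z ^ 2 := by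
    simpa using sq_sum_le_card_mul_sum_sq (s := univ) (f := fun z => |w z|)
  have hpoincare := two_pow_mul_sum_sq_sub_sq_sum_le N u hu
  have hbound : (2 ^ N * √N / 2) ^ 2 = N * 4 ^ N / 4 := by
    rw [div_pow, mul_pow, Real.sq_sqrt (Nat.cast_nonneg _), ← pow_mul, mul_comm N, pow_mul]
    ring
  rw [hcentre]
  refine habs.trans ((pow_le_pow_iff_left₀ (by positivity) (by positivity) two_ne_zero).mp ?_)
  linarith

theorem exists_bijOn_sum_hammingDist_le {N : ℕ} {S A : Finset (Fin N → Bool)} (hcard : #S = #A) :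
    ∃ σ, Set.BijOn σ S A ∧ ∑ x ∈ S, (hammingDist x (σ x) : ℝ) ≤ 2 ^ N * √N / 2 := by
  have hne : {τ : (Fin N → Bool) → (Fin N → Bool) | Set.BijOn τ S A}.Nonempty :=
    S.finite_toSet.exists_bijOn_of_encard_eq (by simp [hcard])
  obtain ⟨σ, hσ, hmin⟩ := Set.exists_min_image _
    (fun τ => ∑ x ∈ S, (hammingDist x (τ x) : ℝ)) (Set.toFinite _) hne
  obtain ⟨u, hu, hcost⟩ := exists_potential_sum_le_sum_sub_sum (d := fun x y => hammingDist x y)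
    (by simp) (fun _ _ => Nat.cast_nonneg _)
    (fun a b c => by exact_mod_cast hammingDist_triangle a b c) hσ (isMinOn_iff.mpr hmin)
  refine ⟨σ, hσ, hcost.trans (sum_sub_sum_le_of_card_eq hcard fun y y' => ?_)⟩
  rw [abs_sub_le_iff]
  constructor
  · linarith [hu y y']
  · rw [hammingDist_comm]
    linarith [hu y' y]

theorem sum_update_not {M : Type*} [AddCommMonoid M] {n : ℕ} (F : (Fin n → Bool) → M) (i : Fin n) :
    ∑ x, F (Function.update x i (!x i)) = ∑ x, F x := by
  have hinv : Function.Involutive fun x : Fin n → Bool => Function.update x i (!x i) := fun x => by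
    simp only [Function.update_self, Bool.not_not, Function.update_idem, Function.update_eq_self]
  exact Equiv.sum_comp hinv.toPerm F

theorem avgStretch_le_one {n m : ℕ} {e : (Fin n → Bool) → (Fin m → Bool)}
    (he : ∀ x i, hammingDist (e x) (e (Function.update x i (!x i))) ≤ 1) :
    avgStretch n e ≤ 1 := by
  refine div_le_one_of_le₀ ?_ (by positivity)
  calc ∑ x, ∑ i, (hammingDist (e x) (e (Function.update x i (!x i))) : ℝ)
      ≤ ∑ _x : Fin n → Bool, ∑ _i : Fin n, (1 : ℝ) := by gcongr with x _ i; exact_mod_cast he x i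
    _ = 2 ^ n * n := by simp

theorem avgStretch_le_add {n m : ℕ} (e φ : (Fin n → Bool) → (Fin m → Bool)) :
    avgStretch n φ ≤ avgStretch n e + 2 * (∑ x, hammingDist (e x) (φ x) : ℝ) / 2 ^ n := by
  set D : (Fin n → Bool) → ℝ := fun x => hammingDist (e x) (φ x)
  have htri (p q r s : Fin m → Bool) :
      (hammingDist p s : ℝ) ≤ hammingDist q p + hammingDist q r + hammingDist r s := by
    have h₁ := hammingDist_triangle p q s
    have h₂ := hammingDist_triangle q r s
    rw [hammingDist_comm p q] at h₁
    exact_mod_cast (by omega : hammingDist p s ≤ _)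
  have hsum : ∑ x, ∑ i, (hammingDist (φ x) (φ (Function.update x i (!x i))) : ℝ) ≤
      ∑ x, ∑ i, (hammingDist (e x) (e (Function.update x i (!x i))) : ℝ) + n * (2 * ∑ x, D x) := by
    calc _ ≤ ∑ x, ∑ i, (D x + hammingDist (e x) (e (Function.update x i (!x i)))
            + D (Function.update x i (!x i))) := by gcongr with x _ i; exact htri _ _ _ _
      _ = _ := by
        simp only [sum_add_distrib]
        rw [sum_comm (f := fun x i => D (Function.update x i (!x i)))]
        simp [sum_update_not, ← mul_sum]
        ring
  rcases n.eq_zero_or_pos with rfl | hn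
  · simp only [avgStretch, CharP.cast_eq_zero, mul_zero, div_zero, zero_add]
    positivity
  calc avgStretch n φ ≤ (∑ x, ∑ i, (hammingDist (e x) (e (Function.update x i (!x i))) : ℝ)
        + n * (2 * ∑ x, D x)) / (2 ^ n * n) := by unfold avgStretch; gcongr
    _ = avgStretch n e + 2 * (∑ x, D x) / 2 ^ n := by
      rw [avgStretch, add_div]
      congr 1
      field_simp

theorem stmt8_general (n : ℕ) (A : Finset (Fin (n + 1) → Bool))
    (hA : A.card = 2 ^ n) :
    ∃ φ : (Fin n → Bool) → (Fin (n + 1) → Bool),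
      Set.BijOn φ Set.univ (A : Set (Fin (n + 1) → Bool)) ∧
      avgStretch n φ ≤ 2 * Real.sqrt (2 * (n + 1)) + 1 := by
  set e : (Fin n → Bool) → (Fin (n + 1) → Bool) := fun x => Fin.cons false x
  have he_inj : Function.Injective e := Fin.cons_right_injective (α := fun _ => Bool) false
  have he : Set.BijOn e Set.univ (univ.image e) := by
    rw [coe_image, coe_univ]
    exact he_inj.injOn.bijOn_image
  obtain ⟨σ, hσ, hcost⟩ := exists_bijOn_sum_hammingDist_le (S := univ.image e) (A := A)
    (by rw [card_image_of_injective _ he_inj, hA]; simp)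
  refine ⟨σ ∘ e, hσ.comp he, ?_⟩
  have he_stretch : avgStretch n e ≤ 1 := avgStretch_le_one fun x i => by
    show hammingDist (Fin.cons false x : Fin (n + 1) → Bool) (Fin.cons false _) ≤ 1
    rw [hammingDist_cons_cons, if_pos rfl, hammingDist_update_not]
  have hdisp : (∑ x, hammingDist (e x) (σ (e x)) : ℝ) ≤ 2 ^ n * √(n + 1) := by
    rw [← sum_image (f := fun z => (hammingDist z (σ z) : ℝ)) fun x _ y _ h => he_inj h]
    refine hcost.trans (le_of_eq ?_)
    push_cast
    ring
  calc avgStretch n (σ ∘ e)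
      ≤ avgStretch n e + 2 * (∑ x, hammingDist (e x) (σ (e x)) : ℝ) / 2 ^ n :=
        avgStretch_le_add e (σ ∘ e)
    _ ≤ 1 + 2 * (2 ^ n * √(n + 1)) / 2 ^ n := by gcongr
    _ = 2 * √(n + 1) + 1 := by field_simp; ring
    _ ≤ 2 * √(2 * (n + 1)) + 1 := by gcongr; linarith

/-- For any set `A ⊆ {0,1}^n` of density `1/2` there is a bijection
`φ : {0,1}^{n-1} → A` with average stretch at most `2√(2n) + 1 = O(√n)`. -/
theorem stmt8 (n : ℕ) (hn : 0 < n) (A : Finset (Fin (n + 1) → Bool))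
    (hA : A.card = 2 ^ n) :
    ∃ φ : (Fin n → Bool) → (Fin (n + 1) → Bool),
      Set.BijOn φ Set.univ (A : Set (Fin (n + 1) → Bool)) ∧
      avgStretch n φ ≤ 2 * Real.sqrt (2 * (n + 1)) + 1 :=
  stmt8_general n A hA
end

section
/- For n = 3^k, there exists a bijection φ : {0,1}^{n-1} → A_k = {x ∈ {0,1}^n : RecMaj_k(x) = 1} with average stretch avgStretch(φ) ≤ 20. -/
open Finset

/-- Majority of three bits. -/
def maj3 (a b c : Bool) : Bool := (a && b) || (a && c) || (b && c)

/-- Recursive majority of 3's on `3^k` bits. -/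
def recMaj : ∀ k : ℕ, (Fin (3 ^ k) → Bool) → Bool
  | 0, x => x ⟨0, by norm_num⟩
  | k + 1, x =>
    let b : Fin 3 → Bool := fun r =>
      recMaj k (fun i => x ⟨r * 3 ^ k + i, by
        have hi := i.isLt
        have hr : (r : ℕ) ≤ 2 := Nat.lt_succ_iff.mp r.isLt
        have hm : (r : ℕ) * 3 ^ k ≤ 2 * 3 ^ k := Nat.mul_le_mul_right _ hr
        have h3 : (3 : ℕ) ^ (k + 1) = 3 ^ k * 3 := pow_succ 3 k
        omega⟩)
    maj3 (b 0) (b 1) (b 2)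

/-!
The bijections `φ_k : {0,1}^(3^k - 1) → RecMaj_k⁻¹(1)` are built recursively. Given `φ = φ_k`,
an input `(u, v, w, b)` with `u, v ∈ {0,1}^(3^k - 1)`, `w ∈ {0,1}^(3^k)` and a bit `b` is sent to
`(φ u, φ v, w)` if `b = 0`; if `b = 1`, write `w = (w', c)` and send it to `(φ u, ¬φ v, φ w')` or
`(¬φ u, φ v, φ w')` according to `c`. As `RecMaj_k` is self-dual, the three branches cover the three
disjoint ways for `RecMaj_{k+1}` to accept: the first two blocks accepted, or exactly one of them
rejected and the third accepted.

Flipping a bit of `u`, `v` or `w'` moves one block along an edge of `φ` (complementation is an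
isometry), flipping a bit of `w` when `b = 0` moves one output bit, and only the flips of `b` and `c`
are left with the trivial bound `3^(k+1)`. Summing over all edges, the total stretch `T_k` satisfies
`T_{k+1} ≤ 10·4^m·T_k + 20(m+1)·8^m` with `m = 3^k - 1`, which preserves `T_k ≤ 20·2^m·m`,
i.e. average stretch at most `20`.
-/

open Function

namespace BoolCube

variable {α α' β β' γ δ : Type*}

def reindex (eα : α ≃ α') (eβ : β ≃ β') (φ : (α → Bool) → (β → Bool)) :
    (α' → Bool) → (β' → Bool) :=
  fun x => φ (x ∘ eα) ∘ eβ.symm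

def sumMap (φ : (α → Bool) → (β → Bool)) (ψ : (γ → Bool) → (δ → Bool)) :
    (α ⊕ γ → Bool) → (β ⊕ δ → Bool) :=
  fun x => Sum.elim (φ (x ∘ Sum.inl)) (ψ (x ∘ Sum.inr))

def switch (F G : (γ → Bool) → (δ → Bool)) : (γ ⊕ Unit → Bool) → (δ → Bool) :=
  fun x => bif x (Sum.inr ()) then G (x ∘ Sum.inl) else F (x ∘ Sum.inl)

lemma injective_reindex (eα : α ≃ α') (eβ : β ≃ β') {φ : (α → Bool) → (β → Bool)}
    (hφ : Injective φ) : Injective (reindex eα eβ φ) := by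
  intro x x' h
  have h' : φ (x ∘ eα) = φ (x' ∘ eα) := eβ.symm.surjective.injective_comp_right h
  exact eα.surjective.injective_comp_right (hφ h')

lemma range_reindex (eα : α ≃ α') (eβ : β ≃ β') (φ : (α → Bool) → (β → Bool)) :
    Set.range (reindex eα eβ φ) = {y | y ∘ eβ ∈ Set.range φ} := by
  ext y
  constructor
  · rintro ⟨x, rfl⟩
    exact ⟨x ∘ eα, by simp [reindex, comp_assoc]⟩
  · rintro ⟨x, hx⟩
    exact ⟨x ∘ eα.symm, by simp [reindex, comp_assoc, hx]⟩

lemma injective_sumMap {φ : (α → Bool) → (β → Bool)} {ψ : (γ → Bool) → (δ → Bool)}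
    (hφ : Injective φ) (hψ : Injective ψ) : Injective (sumMap φ ψ) := by
  intro x x' h
  have hl : φ (x ∘ Sum.inl) = φ (x' ∘ Sum.inl) := congrArg (· ∘ Sum.inl) h
  have hr : ψ (x ∘ Sum.inr) = ψ (x' ∘ Sum.inr) := congrArg (· ∘ Sum.inr) h
  rw [← Sum.elim_comp_inl_inr x, ← Sum.elim_comp_inl_inr x', hφ hl, hψ hr]

lemma range_sumMap (φ : (α → Bool) → (β → Bool)) (ψ : (γ → Bool) → (δ → Bool)) :
    Set.range (sumMap φ ψ) =
      {y | y ∘ Sum.inl ∈ Set.range φ ∧ y ∘ Sum.inr ∈ Set.range ψ} := by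
  ext y
  constructor
  · rintro ⟨x, rfl⟩
    exact ⟨⟨_, rfl⟩, ⟨_, rfl⟩⟩
  · rintro ⟨⟨p, hp⟩, ⟨q, hq⟩⟩
    exact ⟨Sum.elim p q, by simp [sumMap, hp, hq]⟩

lemma eq_sum_elim_const (x : γ ⊕ Unit → Bool) :
    x = Sum.elim (x ∘ Sum.inl) fun _ => x (Sum.inr ()) := by
  ext (i | _) <;> rfl

lemma switch_sum_elim (F G : (γ → Bool) → (δ → Bool)) (p : γ → Bool) (b : Bool) :
    switch F G (Sum.elim p fun _ => b) = bif b then G p else F p := rfl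

lemma injective_switch {F G : (γ → Bool) → (δ → Bool)} (hF : Injective F) (hG : Injective G)
    (hFG : Disjoint (Set.range F) (Set.range G)) : Injective (switch F G) := by
  intro x x' h
  obtain ⟨p, b, rfl⟩ : ∃ p b, x = Sum.elim p fun _ => b := ⟨_, _, eq_sum_elim_const x⟩
  obtain ⟨p', b', rfl⟩ : ∃ p b, x' = Sum.elim p fun _ => b := ⟨_, _, eq_sum_elim_const x'⟩
  cases b <;> cases b' <;> simp only [switch_sum_elim, cond_true, cond_false] at h
  · rw [hF h]
  · exact absurd h (hFG.ne_of_mem ⟨_, rfl⟩ ⟨_, rfl⟩)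
  · exact absurd h.symm (hFG.ne_of_mem ⟨_, rfl⟩ ⟨_, rfl⟩)
  · rw [hG h]

lemma range_switch (F G : (γ → Bool) → (δ → Bool)) :
    Set.range (switch F G) = Set.range F ∪ Set.range G := by
  ext y
  constructor
  · rintro ⟨x, rfl⟩
    rw [eq_sum_elim_const x]
    cases x (Sum.inr ())
    · exact Or.inl ⟨_, rfl⟩
    · exact Or.inr ⟨_, rfl⟩
  · rintro (⟨p, rfl⟩ | ⟨p, rfl⟩)
    · exact ⟨Sum.elim p fun _ => false, rfl⟩
    · exact ⟨Sum.elim p fun _ => true, rfl⟩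

def blockMaj (f : (β → Bool) → Bool) (y : β ⊕ β ⊕ β → Bool) : Bool :=
  maj3 (f (y ∘ Sum.inl)) (f ((y ∘ Sum.inr) ∘ Sum.inl)) (f ((y ∘ Sum.inr) ∘ Sum.inr))

lemma range_compl_comp {f : (β → Bool) → Bool} {φ : (α → Bool) → (β → Bool)}
    (hf : ∀ y, f yᶜ = !f y) (hφ : Set.range φ = {y | f y = true}) :
    Set.range (fun x => (φ x)ᶜ) = {y | f y = false} := by
  ext y
  have hmem : y ∈ Set.range (fun x => (φ x)ᶜ) ↔ yᶜ ∈ Set.range φ :=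
    ⟨fun ⟨x, hx⟩ => ⟨x, by rw [← hx, compl_compl]⟩, fun ⟨x, hx⟩ => ⟨x, by simp [hx]⟩⟩
  rw [hmem, hφ]
  simp [hf]

def splitLast (e : α ⊕ Unit ≃ β) : α ⊕ α ⊕ β ≃ (α ⊕ α ⊕ α) ⊕ Unit :=
  (Equiv.sumCongr (Equiv.refl α) (Equiv.sumCongr (Equiv.refl α) e.symm)).trans <|
    (Equiv.sumCongr (Equiv.refl α) (Equiv.sumAssoc α α Unit).symm).trans
      (Equiv.sumAssoc α (α ⊕ α) Unit).symm

/-- The recursive step on inputs `(((u, v, w'), c), b)`; the branch `b = 0` reads `(w', c)` as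
a point of `{0,1}^β` through `e`. -/
def majStep (φ : (α → Bool) → (β → Bool)) (e : α ⊕ Unit ≃ β) :
    (((α ⊕ α ⊕ α) ⊕ Unit) ⊕ Unit → Bool) → (β ⊕ β ⊕ β → Bool) :=
  switch (reindex (splitLast e) (Equiv.refl _) (sumMap φ (sumMap φ id)))
    (switch (sumMap φ (sumMap (fun x => (φ x)ᶜ) φ)) (sumMap (fun x => (φ x)ᶜ) (sumMap φ φ)))

lemma range_majStep {f : (β → Bool) → Bool} {φ : (α → Bool) → (β → Bool)}
    (hf : ∀ y, f yᶜ = !f y) (hφ : Set.range φ = {y | f y = true}) (e : α ⊕ Unit ≃ β) :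
    Set.range (majStep φ e) = {y | blockMaj f y = true} := by
  simp only [majStep, range_switch, range_reindex, range_sumMap, range_compl_comp hf hφ, hφ,
    Set.range_id]
  ext y
  simp only [blockMaj, Set.mem_union, Set.mem_ofPred_eq, Equiv.coe_refl, comp_id, Set.mem_univ,
    and_true]
  generalize f (y ∘ Sum.inl) = a, f ((y ∘ Sum.inr) ∘ Sum.inl) = b, f ((y ∘ Sum.inr) ∘ Sum.inr) = c
  cases a <;> cases b <;> cases c <;> simp [maj3]

lemma injective_majStep {f : (β → Bool) → Bool} {φ : (α → Bool) → (β → Bool)}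
    (hf : ∀ y, f yᶜ = !f y) (hinj : Injective φ) (hφ : Set.range φ = {y | f y = true})
    (e : α ⊕ Unit ≃ β) : Injective (majStep φ e) := by
  have hc : Injective fun x => (φ x)ᶜ := compl_injective.comp hinj
  refine injective_switch
    (injective_reindex _ _ (injective_sumMap hinj (injective_sumMap hinj injective_id)))
    (injective_switch (injective_sumMap hinj (injective_sumMap hc hinj))
      (injective_sumMap hc (injective_sumMap hinj hinj)) ?_) ?_ <;>
  simp only [range_switch, range_reindex, range_sumMap, range_compl_comp hf hφ, hφ, Set.range_id,
    Set.disjoint_left, Set.mem_union, Set.mem_ofPred_eq, Equiv.coe_refl, comp_id, Set.mem_univ,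
    and_true] <;>
  intro y <;> simp_all

variable [Fintype α] [DecidableEq α] [Fintype α'] [DecidableEq α'] [Fintype β] [Fintype β']
  [Fintype γ] [DecidableEq γ] [Fintype δ]

lemma hammingDist_eq_sum (y y' : β → Bool) :
    hammingDist y y' = ∑ i, if y i ≠ y' i then 1 else 0 :=
  card_filter _ _

lemma hammingDist_sum_elim (a a' : β → Bool) (b b' : δ → Bool) :
    hammingDist (Sum.elim a b) (Sum.elim a' b') = hammingDist a a' + hammingDist b b' := by
  rw [hammingDist_eq_sum, hammingDist_eq_sum, hammingDist_eq_sum, Fintype.sum_sum_type]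
  rfl

lemma hammingDist_comp_equiv (e : β' ≃ β) (y y' : β → Bool) :
    hammingDist (y ∘ e) (y' ∘ e) = hammingDist y y' := by
  simp only [hammingDist_eq_sum, comp_apply]
  exact e.sum_comp fun i => if y i ≠ y' i then 1 else 0

lemma hammingDist_compl (y y' : β → Bool) : hammingDist yᶜ y'ᶜ = hammingDist y y' :=
  hammingDist_comp (fun _ => compl) fun _ => compl_injective

lemma hammingDist_update_not (x : α → Bool) (i : α) :
    hammingDist x (update x i (!x i)) = 1 := by
  rw [hammingDist_comm, hammingDist, card_eq_one]
  exact ⟨i, by ext j; by_cases h : j = i <;> simp [h]⟩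

def edgeSum (φ : (α → Bool) → (β → Bool)) : ℕ :=
  ∑ x, ∑ i, hammingDist (φ x) (φ (update x i (!x i)))

lemma edgeSum_le (φ : (α → Bool) → (β → Bool)) :
    edgeSum φ ≤ 2 ^ Fintype.card α * Fintype.card α * Fintype.card β := by
  calc edgeSum φ ≤ ∑ _x : α → Bool, ∑ _i : α, Fintype.card β :=
        sum_le_sum fun _ _ => sum_le_sum fun _ _ => hammingDist_le_card_fintype
    _ = _ := by simp [mul_assoc]

lemma edgeSum_id :
    edgeSum (id : (α → Bool) → (α → Bool)) = 2 ^ Fintype.card α * Fintype.card α := by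
  simp [edgeSum, hammingDist_update_not]

lemma edgeSum_compl (φ : (α → Bool) → (β → Bool)) :
    edgeSum (fun x => (φ x)ᶜ) = edgeSum φ := by
  simp only [edgeSum, hammingDist_compl]

lemma edgeSum_reindex (eα : α ≃ α') (eβ : β ≃ β') (φ : (α → Bool) → (β → Bool)) :
    edgeSum (reindex eα eβ φ) = edgeSum φ := by
  unfold edgeSum reindex
  simp only [hammingDist_comp_equiv, update_comp_equiv]
  refine Fintype.sum_equiv (eα.arrowCongr (Equiv.refl Bool)).symm _ _ fun x => ?_
  refine (Fintype.sum_equiv eα _ _ fun i => ?_).symm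
  simp [Equiv.arrowCongr]

lemma edgeSum_sum_elim (F : (α ⊕ γ → Bool) → (β → Bool)) :
    edgeSum F = ∑ q, edgeSum (fun p => F (Sum.elim p q)) +
      ∑ p, edgeSum (fun q => F (Sum.elim p q)) := by
  unfold edgeSum
  rw [← (Equiv.sumArrowEquivProdArrow α γ Bool).symm.sum_comp, Fintype.sum_prod_type,
    sum_comm (γ := γ → Bool), ← sum_add_distrib]
  refine sum_congr rfl fun p _ => ?_
  rw [← sum_add_distrib]
  refine sum_congr rfl fun q _ => ?_
  have hpq : (Equiv.sumArrowEquivProdArrow α γ Bool).symm (p, q) = Sum.elim p q := rfl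
  simp only [hpq, Fintype.sum_sum_type, Sum.update_elim_inl, Sum.update_elim_inr, Sum.elim_inl,
    Sum.elim_inr]

lemma edgeSum_sum_elim_const_right (φ : (α → Bool) → (β → Bool)) (b : δ → Bool) :
    edgeSum (fun x => Sum.elim (φ x) b) = edgeSum φ := by
  simp [edgeSum, hammingDist_sum_elim]

lemma edgeSum_sum_elim_const_left (a : β → Bool) (ψ : (α → Bool) → (δ → Bool)) :
    edgeSum (fun x => Sum.elim a (ψ x)) = edgeSum ψ := by
  simp [edgeSum, hammingDist_sum_elim]

lemma edgeSum_sumMap (φ : (α → Bool) → (β → Bool)) (ψ : (γ → Bool) → (δ → Bool)) :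
    edgeSum (sumMap φ ψ) =
      2 ^ Fintype.card γ * edgeSum φ + 2 ^ Fintype.card α * edgeSum ψ := by
  rw [edgeSum_sum_elim]
  simp [sumMap, edgeSum_sum_elim_const_right, edgeSum_sum_elim_const_left]

lemma edgeSum_switch_le (F G : (γ → Bool) → (δ → Bool)) :
    edgeSum (switch F G) ≤
      edgeSum F + edgeSum G + 2 ^ Fintype.card γ * 2 * Fintype.card δ := by
  have hbranches : ∑ q : Unit → Bool, edgeSum (fun p => switch F G (Sum.elim p q)) =
      edgeSum F + edgeSum G := by
    refine (Fintype.sum_equiv (Equiv.funUnique Unit Bool) _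
      (fun b => edgeSum fun p => bif b then G p else F p) fun _ => rfl).trans ?_
    simp [add_comm]
  calc edgeSum (switch F G) = edgeSum F + edgeSum G +
        ∑ p, edgeSum (fun q : Unit → Bool => switch F G (Sum.elim p q)) := by
        rw [edgeSum_sum_elim, hbranches]
    _ ≤ edgeSum F + edgeSum G + ∑ _p : γ → Bool, 2 * Fintype.card δ := by
        gcongr with p
        simpa using edgeSum_le (fun q : Unit → Bool => switch F G (Sum.elim p q))
    _ = _ := by simp [mul_assoc]

lemma edgeSum_majStep_le [DecidableEq β] (φ : (α → Bool) → (β → Bool)) (e : α ⊕ Unit ≃ β) :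
    edgeSum (majStep φ e) ≤ 10 * 2 ^ (2 * Fintype.card α) * edgeSum φ +
      20 * (Fintype.card α + 1) * 2 ^ (3 * Fintype.card α) := by
  have hβ : Fintype.card β = Fintype.card α + 1 := by simp [← Fintype.card_congr e]
  calc edgeSum (majStep φ e)
      ≤ edgeSum (sumMap φ (sumMap φ id)) +
          (edgeSum (sumMap φ (sumMap (fun x => (φ x)ᶜ) φ)) +
            edgeSum (sumMap (fun x => (φ x)ᶜ) (sumMap φ φ)) +
            2 ^ Fintype.card (α ⊕ α ⊕ α) * 2 * Fintype.card (β ⊕ β ⊕ β)) +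
          2 ^ Fintype.card ((α ⊕ α ⊕ α) ⊕ Unit) * 2 * Fintype.card (β ⊕ β ⊕ β) := by
        refine (edgeSum_switch_le _ _).trans ?_
        rw [edgeSum_reindex]
        gcongr
        exact edgeSum_switch_le _ _
    _ = _ := by
        simp only [edgeSum_sumMap, edgeSum_compl, edgeSum_id, Fintype.card_sum, hβ,
          Fintype.card_unit]
        ring

end BoolCube

open BoolCube

lemma avgStretch_eq_edgeSum {n m : ℕ} (φ : (Fin n → Bool) → (Fin m → Bool)) :
    avgStretch n φ = edgeSum φ / (2 ^ n * n) := by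
  simp [avgStretch, edgeSum]

lemma maj3_not (a b c : Bool) : maj3 (!a) (!b) (!c) = !maj3 a b c := by
  cases a <;> cases b <;> cases c <;> rfl

def recMajBlocks (k : ℕ) : Fin (3 ^ k) ⊕ Fin (3 ^ k) ⊕ Fin (3 ^ k) ≃ Fin (3 ^ (k + 1)) :=
  (Equiv.sumCongr (Equiv.refl _) finSumFinEquiv).trans <|
    finSumFinEquiv.trans (finCongr (by ring))

lemma recMaj_succ (k : ℕ) (x : Fin (3 ^ (k + 1)) → Bool) :
    recMaj (k + 1) x = blockMaj (recMaj k) (x ∘ recMajBlocks k) := by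
  simp only [recMaj, blockMaj]
  congr <;> funext i <;> congr 1 <;> ext <;> simp [recMajBlocks]; ring

lemma recMaj_compl : ∀ (k : ℕ) (x : Fin (3 ^ k) → Bool), recMaj k xᶜ = !recMaj k x
  | 0, _ => rfl
  | k + 1, x => by
    simp only [recMaj_succ, blockMaj, ← maj3_not, ← recMaj_compl k]
    rfl

lemma stretch_recurrence {m T : ℕ} (hT : T ≤ 20 * 2 ^ m * m) :
    10 * 2 ^ (2 * m) * T + 20 * (m + 1) * 2 ^ (3 * m) ≤ 20 * 2 ^ (3 * m + 2) * (3 * m + 2) :=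
  calc 10 * 2 ^ (2 * m) * T + 20 * (m + 1) * 2 ^ (3 * m)
      ≤ 10 * 2 ^ (2 * m) * (20 * 2 ^ m * m) + 20 * (m + 1) * 2 ^ (3 * m) := by gcongr
    _ = (220 * m + 20) * 2 ^ (3 * m) := by ring
    _ ≤ (240 * m + 160) * 2 ^ (3 * m) := by gcongr <;> omega
    _ = 20 * 2 ^ (3 * m + 2) * (3 * m + 2) := by ring

theorem exists_recMaj_encoding (k : ℕ) :
    ∃ φ : (Fin (3 ^ k - 1) → Bool) → (Fin (3 ^ k) → Bool),
      Injective φ ∧ Set.range φ = {x | recMaj k x = true} ∧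
      edgeSum φ ≤ 20 * 2 ^ (3 ^ k - 1) * (3 ^ k - 1) := by
  induction k with
  | zero =>
    refine ⟨fun _ _ => true, fun _ _ _ => funext fun i => i.elim0, ?_, by simp [edgeSum]⟩
    ext y
    refine ⟨?_, fun hy => ⟨fun i => i.elim0, funext fun i => ?_⟩⟩
    · rintro ⟨_, rfl⟩
      rfl
    · rw [Fin.fin_one_eq_zero i]
      exact hy.symm
  | succ k ih =>
    obtain ⟨φ, hinj, hrange, hφ⟩ := ih
    have h3k : 1 ≤ 3 ^ k := Nat.one_le_pow _ _ (by norm_num)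
    have hpow : 3 ^ (k + 1) = 3 * 3 ^ k := by ring
    let e : Fin (3 ^ k - 1) ⊕ Unit ≃ Fin (3 ^ k) := Fintype.equivOfCardEq (by simp; omega)
    let eS : ((Fin (3 ^ k - 1) ⊕ Fin (3 ^ k - 1) ⊕ Fin (3 ^ k - 1)) ⊕ Unit) ⊕ Unit ≃
        Fin (3 ^ (k + 1) - 1) := Fintype.equivOfCardEq (by simp; omega)
    refine ⟨reindex eS (recMajBlocks k) (majStep φ e),
      injective_reindex _ _ (injective_majStep (recMaj_compl k) hinj hrange e), ?_, ?_⟩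
    · ext y
      simp [range_reindex, range_majStep (recMaj_compl k) hrange, recMaj_succ]
    · rw [edgeSum_reindex]
      refine (edgeSum_majStep_le φ e).trans ?_
      rw [Fintype.card_fin, show 3 ^ (k + 1) - 1 = 3 * (3 ^ k - 1) + 2 by omega]
      exact stretch_recurrence hφ

theorem stmt17_general (k : ℕ) :
    ∃ φ : (Fin (3 ^ k - 1) → Bool) → (Fin (3 ^ k) → Bool),
      Set.BijOn φ Set.univ {x | recMaj k x = true} ∧
      avgStretch (3 ^ k - 1) φ ≤ 20 := by
  obtain ⟨φ, hinj, hrange, hφ⟩ := exists_recMaj_encoding k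
  refine ⟨φ, ?_, ?_⟩
  · rw [← hrange, ← Set.image_univ]
    exact (Set.injOn_univ.2 hinj).bijOn_image
  · rw [avgStretch_eq_edgeSum]
    refine div_le_of_le_mul₀ (by positivity) (by norm_num) ?_
    rw [← mul_assoc]
    exact_mod_cast hφ

/-- For `n = 3^k` there is a bijection `φ : {0,1}^{n-1} → A_k = RecMaj_k^{-1}(1)`
with average stretch at most `20`. -/
theorem stmt17 (k : ℕ) (hk : 0 < k) :
    ∃ φ : (Fin (3 ^ k - 1) → Bool) → (Fin (3 ^ k) → Bool),
      Set.BijOn φ Set.univ {x | recMaj k x = true} ∧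
      avgStretch (3 ^ k - 1) φ ≤ 20 :=
  stmt17_general k
end
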